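/- For any vertex t of an alternating base tree T with dist^β(t) < ∞, the unorthodox distance exceeds the height of a minimum incoming edge: dist^β(t) > hlevel(e*(t)). -/

import Mathlib

open SimpleGraph
open scoped Classical

variable {V : Type*} [Fintype V] [DecidableEq V]

/-- A matching system `(G, M)` in which a super free vertex `f` has been added:
`U` is the set of free vertices of the original system, and for each `u ∈ U`
the vertex `mid u` forms the length-two alternating path `f - mid u - u`
(with `{f, mid u} ∉ M` and `{mid u, u} ∈ M`).  After the addition, `f` is the
unique free vertex. -/
structure Sys (V : Type*) [Fintype V] [DecidableEq V] where
  G : SimpleGraph V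
  M : Set (Sym2 V)
  f : V
  U : Set V
  mid : V → V
  M_sub : M ⊆ G.edgeSet
  matching : ∀ v : V, ∀ e₁ ∈ M, ∀ e₂ ∈ M, v ∈ e₁ → v ∈ e₂ → e₁ = e₂
  f_free : ∀ e ∈ M, f ∉ e
  others_matched : ∀ v : V, v ≠ f → ∃ e ∈ M, v ∈ e
  U_spec : ∀ u ∈ U, G.Adj f (mid u) ∧ s(f, mid u) ∉ M ∧ G.Adj (mid u) u ∧ s(mid u, u) ∈ M
  mid_deg : ∀ u ∈ U, ∀ w : V, G.Adj (mid u) w → w = f ∨ w = u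
  f_adj : ∀ w : V, G.Adj f w → ∃ u ∈ U, w = mid u
  mid_inj : ∀ u ∈ U, ∀ u' ∈ U, mid u = mid u' → u = u'

namespace Sys

variable (S : Sys V)

/-- An alternating path of the matching system: a simple path whose consecutive
edges alternate membership in `M`. -/
def IsAltPath {a b : V} (p : S.G.Walk a b) : Prop :=
  p.IsPath ∧ List.Chain' (fun e₁ e₂ => (e₁ ∈ S.M ↔ e₂ ∉ S.M)) p.edges

/-- `adist S θ u` is the length of a shortest alternating path from `f` to `u`
whose length has parity `θ` (`true` = odd, `false` = even); `⊤` if none exists. -/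
noncomputable def adist (θ : Bool) (u : V) : ℕ∞ :=
  sInf {n : ℕ∞ | ∃ p : S.G.Walk S.f u,
    S.IsAltPath p ∧ (p.length : ℕ∞) = n ∧ (Odd p.length ↔ θ = true)}

/-- The orthodox parity `α(u)` of `u`: the parity with smaller alternating distance. -/
noncomputable def op (u : V) : Bool :=
  if S.adist true u < S.adist false u then true else false

/-- The orthodox distance `dist^α(u)`. -/
noncomputable def distOrth (u : V) : ℕ∞ := S.adist (S.op u) u

/-- The unorthodox distance `dist^β(u)`. -/
noncomputable def distUnorth (u : V) : ℕ∞ := S.adist (!S.op u) u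

/-- `ρ(e)`: `true` (= odd) iff `e` is a matching edge. -/
noncomputable def rho (e : Sym2 V) : Bool := if e ∈ S.M then true else false

/-- `EP(u)`: the set of edges `e` incident to `u` such that some shortest orthodox
alternating path from `f` to `u` terminates with `e`. -/
def EP (u : V) : Set (Sym2 V) :=
  {e | ∃ p : S.G.Walk S.f u, S.IsAltPath p ∧ (p.length : ℕ∞) = S.distOrth u ∧
        p.edges.getLast? = some e}

/-- `P(u)`: the set of immediate predecessors of `u` on shortest orthodox
alternating paths. -/
def Pset (u : V) : Set V := {u' | s(u', u) ∈ S.EP u}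

/-- `EP = ⋃_u EP(u)`. -/
def EPall : Set (Sym2 V) := ⋃ u : V, S.EP u

/-- The volume `vlevel(e) = dist^{ρ(e)}(y) + dist^{ρ(e)}(z) + 1` of an edge `e = {y,z}`. -/
noncomputable def vlevel (e : Sym2 V) : ℕ∞ :=
  Sym2.lift ⟨fun y z => S.adist (S.rho e) y + S.adist (S.rho e) z + 1,
    fun y z => by ring⟩ e

/-- The height `hlevel(e) = max (dist^{ρ(e)}(y)) (dist^{ρ(e)}(z))` of an edge `e = {y,z}`. -/
noncomputable def hlevel (e : Sym2 V) : ℕ∞ :=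
  Sym2.lift ⟨fun y z => max (S.adist (S.rho e) y) (S.adist (S.rho e) z),
    fun y z => max_comm _ _⟩ e

/-- The level `level(e) = n' · vlevel(e) + hlevel(e)` with `n' = |V| + 1 > |V|`,
giving the lexicographic order on (volume, height). -/
noncomputable def level (e : Sym2 V) : ℕ∞ :=
  ((Fintype.card V + 1 : ℕ) : ℕ∞) * S.vlevel e + S.hlevel e

/-- An augmenting path: an alternating path connecting two distinct vertices of `U`,
starting and ending with non-matching edges. -/
def IsAugPath {a b : V} (p : S.G.Walk a b) : Prop :=
  S.IsAltPath p ∧ a ∈ S.U ∧ b ∈ S.U ∧ a ≠ b ∧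
  (∀ e, p.edges.head? = some e → e ∉ S.M) ∧ (∀ e, p.edges.getLast? = some e → e ∉ S.M)

/-- The length of shortest augmenting paths of the system is `L`. -/
def ShortestAugLen (L : ℕ) : Prop :=
  (∃ a b : V, ∃ p : S.G.Walk a b, S.IsAugPath p ∧ p.length = L) ∧
  (∀ a b : V, ∀ p : S.G.Walk a b, S.IsAugPath p → L ≤ p.length)

/-- Vertices of the alternating base DAG `H`: all vertices except `f` and its neighbors. -/
def inH (v : V) : Prop := v ≠ S.f ∧ ¬ S.G.Adj S.f v

/-- The edge relation of the alternating base DAG `H`: an edge from `u` to `v`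
iff `v ∈ P(u)` (upward orientation); vertices of `U` are sinks. -/
def HStep (u v : V) : Prop := S.inH u ∧ S.inH v ∧ u ∉ S.U ∧ v ∈ S.Pset u

end Sys

/-- An alternating base tree of `S`: every non-root vertex has its parent chosen
from `P(u)`; the root is the super free vertex `f`. -/
structure ABT (S : Sys V) where
  par : V → V
  par_f : par S.f = S.f
  par_mem : ∀ u : V, u ≠ S.f → par u ∈ S.Pset u

namespace ABT

variable {S : Sys V} (T : ABT S)

/-- `v` belongs to the subtree `T(t)` rooted at `t`. -/
def inSub (t v : V) : Prop := ∃ n : ℕ, T.par^[n] v = t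

/-- `e` is a tree edge of `T`. -/
def IsTreeEdge (e : Sym2 V) : Prop := ∃ u : V, u ≠ S.f ∧ e = s(u, T.par u)

/-- `e` is an incoming edge of the subtree `T(t)`: a non-tree edge of `G` with
exactly one endpoint inside `T(t)`. -/
def Incoming (t : V) (e : Sym2 V) : Prop :=
  e ∈ S.G.edgeSet ∧ ¬ T.IsTreeEdge e ∧
  ∃ y z : V, e = s(y, z) ∧ T.inSub t z ∧ ¬ T.inSub t y

/-- `e` is a minimum-level incoming edge (MIE) of `T(t)`. -/
def IsMIE (t : V) (e : Sym2 V) : Prop :=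
  T.Incoming t e ∧ ∀ e', T.Incoming t e' → S.level e ≤ S.level e'

/-- `e` is a minimum-volume incoming edge of `T(t)`. -/
def IsMinVolIncoming (t : V) (e : Sym2 V) : Prop :=
  T.Incoming t e ∧ ∀ e', T.Incoming t e' → S.vlevel e ≤ S.vlevel e'

/-- The level of a path w.r.t. `T`: the maximum level of its non-tree edges
(`0` if it contains none). -/
noncomputable def pathLevel {a b : V} (p : S.G.Walk a b) : ℕ∞ :=
  sSup {x : ℕ∞ | ∃ e ∈ p.edges, ¬ T.IsTreeEdge e ∧ x = S.level e}

/-- The volume of a path w.r.t. `T`: the maximum volume of its non-tree edges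
(`0` if it contains none). -/
noncomputable def pathVlevel {a b : V} (p : S.G.Walk a b) : ℕ∞ :=
  sSup {x : ℕ∞ | ∃ e ∈ p.edges, ¬ T.IsTreeEdge e ∧ x = S.vlevel e}

end ABT

/-- An edge is crossable if its volume is `2ℓ+5` and some alternating base tree
puts its endpoints into subtrees rooted at two distinct free vertices. -/
def Sys.Crossable (S : Sys V) (ℓ : ℕ) (e : Sym2 V) : Prop :=
  S.vlevel e = ((2 * ℓ + 5 : ℕ) : ℕ∞) ∧
  ∃ T : ABT S, ∃ y z : V, e = s(y, z) ∧
    ∃ uy ∈ S.U, ∃ uz ∈ S.U, uy ≠ uz ∧ T.inSub uy y ∧ T.inSub uz z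

/-- `E*`: the set of crossable critical edges (crossable and not in `EP`). -/
def Sys.Estar (S : Sys V) (ℓ : ℕ) : Set (Sym2 V) :=
  {e | S.Crossable ℓ e ∧ e ∉ S.EPall}

/-- A (directed) path in the alternating base DAG `H`. -/
structure HPath (S : Sys V) where
  verts : List V
  ne : verts ≠ []
  chain : verts.Chain' S.HStep
  mem : ∀ v ∈ verts, S.inH v
  nodup : verts.Nodup

/-- The first vertex of an `H`-path. -/
def HPath.first {S : Sys V} (P : HPath S) : V := P.verts.head P.ne

/-- The last vertex of an `H`-path. -/
def HPath.last {S : Sys V} (P : HPath S) : V := P.verts.getLast P.ne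

/-- A double path `(P, Q, y, z)`: `{y,z} ∈ E*` and `P`, `Q` are vertex-disjoint
paths of `H` from `y` and `z` terminating at two distinct free vertices. -/
structure DoublePath (S : Sys V) (ℓ : ℕ) where
  P : HPath S
  Q : HPath S
  y : V
  z : V
  hy : P.first = y
  hz : Q.first = z
  he : s(y, z) ∈ S.Estar ℓ
  hPU : P.last ∈ S.U
  hQU : Q.last ∈ S.U
  hne : P.last ≠ Q.last
  hdisj : ∀ v ∈ P.verts, v ∉ Q.verts

/-- `T` respects an `H`-path `P` if consecutive vertices of `P` are
child–parent pairs of `T`. -/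
def ABT.RespectsPath {S : Sys V} (T : ABT S) (P : HPath S) : Prop :=
  P.verts.Chain' (fun u v => T.par u = v)

/-- `T` respects a double path if it respects both of its constituent paths. -/
def ABT.RespectsDP {S : Sys V} {ℓ : ℕ} (T : ABT S) (D : DoublePath S ℓ) : Prop :=
  T.RespectsPath D.P ∧ T.RespectsPath D.Q

/-- An in-tree of `H` rooted at a free vertex: every non-root vertex has a unique
outgoing `H`-edge inside the tree and all vertices reach the root.  (Paths ending
at a free vertex are a special case.) -/
structure InTree (S : Sys V) where
  W : Set V
  root : V
  g : V → V
  root_W : root ∈ W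
  root_U : root ∈ S.U
  step : ∀ v ∈ W, v ≠ root → S.HStep v (g v) ∧ g v ∈ W
  reach : ∀ v ∈ W, ∃ n : ℕ, g^[n] v = root

/-!
Let `p` be a shortest unorthodox alternating path to `t`, of length `L = dist^β(t)`, and `q` a
shortest orthodox one, of length `dist^α(t) < L`. Let `{y, z}` be the edge through which `p` first
enters `T(t)`. It is an incoming edge: were it the tree edge into `t`, `p` would have orthodox
parity. The part of `p` before `z` is longer than `q`, since otherwise `z` would have orthodox
distance at most `dist^α(t)`, forcing `z = t` and `L ≤ dist^α(t)`. Follow `q` up to its first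
vertex `w` on the rest of `p`: continuing along `p` to `t` would give an unorthodox path shorter
than `p`, so the parities are such that returning along `p` from `w` to `z` is alternating. This
gives `dist^{ρ}(z) ≤ dist^α(t) + (L - |p before z| - 1)`, hence `vlevel {y,z} ≤ L + dist^α(t)` and
`hlevel {y,z} < L`.

Conversely every incoming edge `e` of `T(t)` has `hlevel e + dist^α(t) ≤ vlevel e`: its inner
endpoint has both distances at least `dist^α(t)`, its outer one at least `dist^α(t) - 1`. So if
`hlevel e* ≥ L`, then `vlevel e* ≥ vlevel {y,z}`, and since `level` orders edges
lexicographically by volume and height, minimality of `e*` gives `hlevel e* ≤ hlevel {y,z} < L`.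
-/

namespace SimpleGraph.Walk

section

variable {V : Type*} {G : SimpleGraph V}

theorem IsPath.append {u v w : V} {p : G.Walk u v} {q : G.Walk v w} (hp : p.IsPath)
    (hq : q.IsPath) (h : ∀ x ∈ p.support, x ∈ q.support → x = v) : (p.append q).IsPath := by
  rw [isPath_def, support_append, List.nodup_append]
  refine ⟨hp.support_nodup, hq.support_nodup.sublist (List.tail_sublist _), ?_⟩
  rintro x hx _ hx' rfl
  obtain rfl := h x hx (List.mem_of_mem_tail hx')
  have := hq.support_nodup
  rw [← cons_tail_support] at this
  exact (List.nodup_cons.mp this).1 hx'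

theorem exists_eq_append_of_end_mem {u v : V} (p : G.Walk u v) {s : Set V} (hv : v ∈ s) :
    ∃ w ∈ s, ∃ (p₁ : G.Walk u w) (p₂ : G.Walk w v),
      p = p₁.append p₂ ∧ ∀ x ∈ p₁.support, x ∈ s → x = w := by
  induction p with
  | nil => exact ⟨_, hv, nil, nil, rfl, by simp⟩
  | @cons a b c h q ih =>
    by_cases ha : a ∈ s
    · exact ⟨a, ha, nil, cons h q, rfl, by simp⟩
    obtain ⟨w, hw, p₁, p₂, rfl, hfirst⟩ := ih hv
    refine ⟨w, hw, cons h p₁, p₂, rfl, ?_⟩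
    intro x hx hxs
    rcases List.mem_cons.mp (support_cons h p₁ ▸ hx) with rfl | hx
    · exact absurd hxs ha
    · exact hfirst x hx hxs

theorem exists_eq_append_cons_of_start_not_mem_of_end_mem {u v : V} (p : G.Walk u v)
    {s : Set V} (hu : u ∉ s) (hv : v ∈ s) :
    ∃ (y z : V) (p₁ : G.Walk u y) (h : G.Adj y z) (p₂ : G.Walk z v),
      p = p₁.append (cons h p₂) ∧ y ∉ s ∧ z ∈ s := by
  induction p with
  | nil => exact absurd hv hu
  | @cons a b c h q ih =>
    by_cases hb : b ∈ s
    · exact ⟨a, b, nil, h, q, rfl, hu, hb⟩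
    obtain ⟨y, z, p₁, h', p₂, rfl, hy, hz⟩ := ih hb hv
    exact ⟨y, z, cons h p₁, h', p₂, rfl, hy, hz⟩

end

end SimpleGraph.Walk

theorem List.IsChain.getLast_iff_of_alternating {α : Type*} {P : α → Prop} {l : List α}
    (hl : l.IsChain fun x y => (P x ↔ ¬P y)) {x y : α} (hx : l.head? = some x)
    (hy : l.getLast? = some y) : P y ↔ (P x ↔ Odd l.length) := by
  induction l generalizing x with
  | nil => simp at hx
  | cons a l ih =>
    obtain rfl : a = x := by simpa using hx
    cases l with
    | nil =>
      obtain rfl : a = y := by simpa using hy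
      simp
    | cons b l =>
      have hab := (List.isChain_cons_cons.mp hl).1
      have := ih (List.isChain_cons_cons.mp hl).2 rfl (by simpa using hy)
      simp only [List.length_cons, Nat.odd_add_one] at this ⊢
      tauto

namespace Sys

variable {S : Sys V}

theorem IsAltPath.reverse {a b : V} {p : S.G.Walk a b} (hp : S.IsAltPath p) :
    S.IsAltPath p.reverse := by
  refine ⟨hp.1.reverse, ?_⟩
  rw [Walk.edges_reverse]
  exact List.isChain_reverse.mpr (hp.2.imp fun _ _ h => by tauto)

theorem IsAltPath.of_append_left {a b c : V} {p : S.G.Walk a b} {q : S.G.Walk b c}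
    (h : S.IsAltPath (p.append q)) : S.IsAltPath p :=
  ⟨h.1.of_append_left, (List.isChain_append.mp (Walk.edges_append p q ▸ h.2)).1⟩

theorem IsAltPath.of_append_right {a b c : V} {p : S.G.Walk a b} {q : S.G.Walk b c}
    (h : S.IsAltPath (p.append q)) : S.IsAltPath q :=
  ⟨h.1.of_append_right, (List.isChain_append.mp (Walk.edges_append p q ▸ h.2)).2.1⟩

theorem not_mem_M_of_head?_eq {v : V} (p : S.G.Walk S.f v) {e : Sym2 V}
    (he : p.edges.head? = some e) : e ∉ S.M := by
  cases p with
  | nil => simp at he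
  | cons h q =>
    obtain rfl : s(S.f, _) = e := by simpa using he
    exact fun hm => S.f_free _ hm (Sym2.mem_mk_left _ _)

theorem IsAltPath.mem_M_iff_of_getLast?_eq {v : V} {p : S.G.Walk S.f v} (hp : S.IsAltPath p)
    {e : Sym2 V} (he : p.edges.getLast? = some e) : e ∈ S.M ↔ Even p.length := by
  obtain ⟨e₀, he₀⟩ : ∃ e₀, p.edges.head? = some e₀ := by
    cases hl : p.edges with
    | nil => simp [hl] at he
    | cons e₀ _ => exact ⟨e₀, rfl⟩
  have h := List.IsChain.getLast_iff_of_alternating (P := (· ∈ S.M)) hp.2 he₀ he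
  rw [Walk.length_edges] at h
  have := S.not_mem_M_of_head?_eq p he₀
  rw [← Nat.not_odd_iff_even]
  tauto

theorem IsAltPath.mem_M_iff_of_head?_eq {w x : V} {a : S.G.Walk S.f w} {b : S.G.Walk w x}
    (hab : S.IsAltPath (a.append b)) {e : Sym2 V} (he : b.edges.head? = some e) :
    e ∈ S.M ↔ Odd a.length := by
  rcases hl : a.edges.getLast? with _ | e₁
  · have ha : a.edges = [] := List.getLast?_eq_none_iff.mp hl
    have h0 : a.length = 0 := by rw [← Walk.length_edges, ha, List.length_nil]
    have : (a.append b).edges.head? = some e := by rwa [Walk.edges_append, ha, List.nil_append]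
    simp [h0, S.not_mem_M_of_head?_eq _ this]
  · have h₁ := hab.of_append_left.mem_M_iff_of_getLast?_eq hl
    have hj := (List.isChain_append.mp (Walk.edges_append a b ▸ hab.2)).2.2 e₁ hl e he
    rw [← Nat.not_even_iff_odd]
    tauto

theorem IsAltPath.append {w x : V} {p : S.G.Walk S.f w} {q : S.G.Walk w x}
    (hp : S.IsAltPath p) (hq : S.IsAltPath q) (hdisj : ∀ v ∈ p.support, v ∈ q.support → v = w)
    (hjunc : ∀ e, q.edges.head? = some e → (e ∈ S.M ↔ Odd p.length)) :
    S.IsAltPath (p.append q) := by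
  refine ⟨hp.1.append hq.1 hdisj, ?_⟩
  rw [Walk.edges_append]
  refine List.isChain_append.mpr ⟨hp.2, hq.2, fun e₁ h₁ e₂ h₂ => ?_⟩
  rw [hp.mem_M_iff_of_getLast?_eq h₁, hjunc e₂ h₂, ← Nat.not_even_iff_odd, not_not]

theorem IsAltPath.append_suffix {w x : V} {a q : S.G.Walk S.f w} {b : S.G.Walk w x}
    (hab : S.IsAltPath (a.append b)) (hq : S.IsAltPath q)
    (hdisj : ∀ v ∈ q.support, v ∈ b.support → v = w) (hpar : Even q.length ↔ Even a.length) :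
    S.IsAltPath (q.append b) :=
  hq.append hab.of_append_right hdisj fun _ he => by
    rw [hab.mem_M_iff_of_head?_eq he, ← Nat.not_even_iff_odd, ← Nat.not_even_iff_odd, hpar]

theorem IsAltPath.append_reverse_suffix {z w : V} {a : S.G.Walk S.f z} {b : S.G.Walk z w}
    {q : S.G.Walk S.f w} (hab : S.IsAltPath (a.append b)) (hq : S.IsAltPath q)
    (hdisj : ∀ v ∈ q.support, v ∈ b.support → v = w)
    (hpar : Even q.length ↔ Odd (a.append b).length) :
    S.IsAltPath (q.append b.reverse) :=
  hq.append hab.of_append_right.reverse (by simpa using hdisj) fun e he => by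
    rw [Walk.edges_reverse, List.head?_reverse] at he
    have hlast : (a.append b).edges.getLast? = some e := by
      rw [Walk.edges_append, List.getLast?_append, he]
      rfl
    rw [hab.mem_M_iff_of_getLast?_eq hlast, ← Nat.not_even_iff_odd, hpar, Nat.not_odd_iff_even]

theorem adist_le_length {θ : Bool} {v : V} {p : S.G.Walk S.f v} (hp : S.IsAltPath p)
    (hθ : Odd p.length ↔ θ = true) : S.adist θ v ≤ p.length :=
  sInf_le ⟨p, hp, rfl, hθ⟩

structure IsShortestAltPath (S : Sys V) (θ : Bool) {v : V} (p : S.G.Walk S.f v) : Prop where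
  isAltPath : S.IsAltPath p
  odd_length_iff : Odd p.length ↔ θ = true
  length_eq : (p.length : ℕ∞) = S.adist θ v

theorem exists_isShortestAltPath {θ : Bool} {v : V} (h : S.adist θ v ≠ ⊤) :
    ∃ p : S.G.Walk S.f v, S.IsShortestAltPath θ p := by
  have hne : {n : ℕ∞ | ∃ p : S.G.Walk S.f v,
      S.IsAltPath p ∧ (p.length : ℕ∞) = n ∧ (Odd p.length ↔ θ = true)}.Nonempty := by
    by_contra hne
    exact h (by rw [adist, Set.not_nonempty_iff_eq_empty.mp hne, sInf_empty])
  obtain ⟨p, hp, hlen, hθ⟩ := csInf_mem hne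
  exact ⟨p, hp, hθ, hlen⟩

theorem IsShortestAltPath.length_le {θ : Bool} {v : V} {p p' : S.G.Walk S.f v}
    (hp : S.IsShortestAltPath θ p) (hp' : S.IsAltPath p') (hθ : Odd p'.length ↔ θ = true) :
    p.length ≤ p'.length := by
  exact_mod_cast hp.length_eq.trans_le (adist_le_length hp' hθ)

theorem distOrth_eq_min (v : V) : S.distOrth v = min (S.adist true v) (S.adist false v) := by
  unfold distOrth op
  split_ifs with h
  · exact (min_eq_left h.le).symm
  · exact (min_eq_right (not_lt.mp h)).symm

theorem distOrth_le_adist (θ : Bool) (v : V) : S.distOrth v ≤ S.adist θ v := by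
  rw [distOrth_eq_min]
  cases θ
  · exact min_le_right _ _
  · exact min_le_left _ _

theorem IsShortestAltPath.length_lt {t : V} {p q : S.G.Walk S.f t}
    (hq : S.IsShortestAltPath (S.op t) q) (hp : S.IsShortestAltPath (!S.op t) p) :
    q.length < p.length := by
  have hle : q.length ≤ p.length := by
    exact_mod_cast hq.length_eq.trans_le ((S.distOrth_le_adist _ t).trans hp.length_eq.ge)
  refine hle.lt_of_ne fun heq => ?_
  have h := hq.odd_length_iff.symm.trans (heq ▸ hp.odd_length_iff)
  cases S.op t <;> simp at h

theorem distOrth_le_length {v : V} {p : S.G.Walk S.f v} (hp : S.IsAltPath p) :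
    S.distOrth v ≤ p.length :=
  (S.distOrth_le_adist _ v).trans (adist_le_length hp (θ := decide (Odd p.length)) (by simp))

theorem adist_lt_card {θ : Bool} {v : V} (h : S.adist θ v ≠ ⊤) :
    S.adist θ v < Fintype.card V := by
  obtain ⟨p, hp⟩ := exists_isShortestAltPath h
  rw [← hp.length_eq]
  exact_mod_cast hp.isAltPath.1.length_lt

theorem distUnorth_f : S.distUnorth S.f = ⊤ := by
  have htrue : S.adist true S.f = ⊤ := by
    by_contra h
    obtain ⟨p, hp⟩ := exists_isShortestAltPath h
    have h := hp.odd_length_iff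
    rw [(Walk.isPath_iff_nil.mp hp.isAltPath.1).length_eq_zero] at h
    simp at h
  simp [distUnorth, op, htrue]

theorem distOrth_le_adist_add_one {θ : Bool} {y z : V} (hyz : S.G.Adj y z)
    (hθ : s(y, z) ∈ S.M ↔ θ = true) : S.distOrth z ≤ S.adist θ y + 1 := by
  rcases eq_or_ne (S.adist θ y) ⊤ with h | h
  · simp [h]
  obtain ⟨p, hp⟩ := exists_isShortestAltPath h
  rw [← hp.length_eq]
  by_cases hz : z ∈ p.support
  · have hsplit : S.IsAltPath ((p.takeUntil z hz).append (p.dropUntil z hz)) := by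
      rw [p.take_spec hz]
      exact hp.isAltPath
    calc S.distOrth z ≤ (p.takeUntil z hz).length := S.distOrth_le_length hsplit.of_append_left
      _ ≤ p.length + 1 := by exact_mod_cast (p.length_takeUntil_le_length hz).trans (Nat.le_succ _)
  · have hconcat : S.IsAltPath (p.concat hyz) := by
      refine hp.isAltPath.append ⟨Walk.IsPath.of_adj hyz, List.isChain_singleton _⟩ ?_ ?_
      · intro v hv hv'
        rcases List.mem_cons.mp hv' with rfl | hv'
        · rfl
        · exact absurd (List.mem_singleton.mp hv' ▸ hv) hz
      · intro e he
        obtain rfl : s(y, z) = e := by simpa using he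
        rw [hθ, hp.odd_length_iff]
    simpa using S.distOrth_le_length hconcat

theorem hlevel_lt_of_vlevel_ne_top {e : Sym2 V} (h : S.vlevel e ≠ ⊤) :
    S.hlevel e < (Fintype.card V + 1 : ℕ) := by
  induction e using Sym2.ind with
  | _ y z =>
    simp only [vlevel, hlevel, Sym2.lift_mk] at h ⊢
    have hy := ne_top_of_le_ne_top h (le_self_add.trans le_self_add)
    have hz := ne_top_of_le_ne_top h (le_add_self.trans le_self_add)
    have hcard : (Fintype.card V : ℕ∞) ≤ (Fintype.card V + 1 : ℕ) := by norm_cast; omega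
    exact max_lt ((adist_lt_card hy).trans_le hcard) ((adist_lt_card hz).trans_le hcard)

theorem hlevel_le_of_level_le {e e' : Sym2 V} (h : S.level e ≤ S.level e')
    (hv : S.vlevel e' ≤ S.vlevel e) (hfin : S.vlevel e' ≠ ⊤) : S.hlevel e ≤ S.hlevel e' := by
  set n : ℕ∞ := ((Fintype.card V + 1 : ℕ) : ℕ∞)
  have hnv : n * S.vlevel e' ≠ ⊤ := WithTop.mul_ne_top (ENat.natCast_ne_top _) hfin
  have hveq : S.vlevel e = S.vlevel e' := by
    refine le_antisymm (not_lt.mp fun hlt => h.not_gt ?_) hv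
    calc S.level e' = n * S.vlevel e' + S.hlevel e' := rfl
      _ < n * S.vlevel e' + n := WithTop.add_lt_add_left hnv (hlevel_lt_of_vlevel_ne_top hfin)
      _ = n * (S.vlevel e' + 1) := by ring
      _ ≤ n * S.vlevel e := by gcongr; exact Order.add_one_le_of_lt hlt
      _ ≤ S.level e := le_self_add
  unfold level at h
  rw [hveq] at h
  exact (WithTop.add_le_add_iff_left hnv).mp h

theorem rho_eq_true_iff (e : Sym2 V) : S.rho e = true ↔ e ∈ S.M := by
  simp [rho]

theorem exists_isAltPath_reroute {θ : Bool} {t y z : V} {p q : S.G.Walk S.f t}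
    {p₁ : S.G.Walk S.f y} {hyz : S.G.Adj y z} {p₂ : S.G.Walk z t}
    (hp : S.IsShortestAltPath θ p) (hsplit : p = p₁.append (Walk.cons hyz p₂))
    (hq : S.IsAltPath q) (hqk : q.length ≤ p₁.length) :
    ∃ r : S.G.Walk S.f z, S.IsAltPath r ∧ r.length ≤ q.length + p₂.length ∧
      (Even r.length ↔ Even p₁.length) := by
  obtain ⟨w, hw, q₁, q₂, rfl, hfirst⟩ :=
    q.exists_eq_append_of_end_mem (s := {v | v ∈ p₂.support}) p₂.end_mem_support
  obtain ⟨b₁, b₂, rfl⟩ : ∃ (b₁ : S.G.Walk z w) (b₂ : S.G.Walk w t), p₂ = b₁.append b₂ :=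
    ⟨_, _, (p₂.take_spec hw).symm⟩
  have hsplit' : p = ((p₁.concat hyz).append b₁).append b₂ := by
    rw [hsplit, ← Walk.append_assoc, Walk.concat_append]
  have hab : S.IsAltPath (((p₁.concat hyz).append b₁).append b₂) := hsplit' ▸ hp.isAltPath
  have hq₁ : S.IsAltPath q₁ := hq.of_append_left
  simp only [Set.mem_ofPred_eq, Walk.mem_support_append_iff] at hfirst
  simp only [Walk.length_append] at hqk ⊢
  by_cases hpar : Even q₁.length ↔ Even ((p₁.concat hyz).append b₁).length
  -- With this parity `q₁` followed by `b₂` is alternating, of the parity of `p`, and shorter.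
  · have hshort := hp.length_le (hab.append_suffix hq₁ (fun v hv hv' => hfirst v hv (.inr hv'))
      hpar) (by
        rw [← hp.odd_length_iff, hsplit', Walk.length_append, Walk.length_append, Nat.odd_add,
          Nat.odd_add, ← Nat.not_even_iff_odd, ← Nat.not_even_iff_odd, hpar])
    simp only [hsplit', Walk.length_append, Walk.length_concat] at hshort
    omega
  · refine ⟨q₁.append b₁.reverse, hab.of_append_left.append_reverse_suffix hq₁
      (fun v hv hv' => hfirst v hv (.inl hv')) ?_, ?_, ?_⟩
    · rw [← Nat.not_even_iff_odd]
      tauto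
    · simp only [Walk.length_append, Walk.length_reverse]
      omega
    · simp only [Walk.length_append, Walk.length_reverse, Walk.length_concat] at hpar ⊢
      simp only [Nat.even_add, Nat.even_add_one] at hpar ⊢
      tauto

end Sys

namespace ABT

variable {S : Sys V} (T : ABT S)

theorem exists_isAltPath_getLast?_eq_par {u : V} (hu : u ≠ S.f) :
    ∃ p : S.G.Walk S.f u, S.IsAltPath p ∧ (p.length : ℕ∞) = S.distOrth u ∧
      p.edges.getLast? = some s(T.par u, u) :=
  T.par_mem u hu

theorem distOrth_ne_top (T : ABT S) {u : V} (hu : u ≠ S.f) : S.distOrth u ≠ ⊤ := by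
  obtain ⟨p, -, hlen, -⟩ := T.exists_isAltPath_getLast?_eq_par hu
  rw [← hlen]
  exact ENat.natCast_ne_top _

theorem distOrth_par_lt {u : V} (hu : u ≠ S.f) : S.distOrth (T.par u) < S.distOrth u := by
  obtain ⟨p, hp, hlen, hlast⟩ := T.exists_isAltPath_getLast?_eq_par hu
  obtain ⟨x, h, r, hr⟩ := p.reverse.exists_eq_cons_of_ne hu
  have hpr : p = r.reverse.concat h.symm := by
    rw [← p.reverse_reverse, hr, Walk.reverse_cons]
    rfl
  subst hpr
  rw [Walk.edges_concat, List.concat_eq_append, List.getLast?_concat, Option.some_inj] at hlast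
  obtain rfl : x = T.par u := Sym2.congr_left.mp hlast
  calc S.distOrth (T.par u) ≤ r.reverse.length := S.distOrth_le_length hp.of_append_left
    _ < (r.reverse.concat h.symm).length := by simp [ENat.lt_add_one_iff]
    _ = S.distOrth u := hlen

theorem distOrth_iterate_par_lt {u : V} (n : ℕ) (h : T.par^[n + 1] u ≠ S.f) :
    S.distOrth (T.par^[n + 1] u) < S.distOrth u := by
  induction n generalizing u with
  | zero => exact T.distOrth_par_lt fun hu => h (by simp [hu, T.par_f])
  | succ n ih =>
    rw [Function.iterate_succ_apply] at h ⊢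
    have hu : u ≠ S.f := fun hu => h (by rw [hu, T.par_f, Function.iterate_fixed T.par_f])
    exact (ih h).trans (T.distOrth_par_lt hu)

theorem distOrth_lt_of_inSub {t z : V} (ht : t ≠ S.f) (h : T.inSub t z) (hne : z ≠ t) :
    S.distOrth t < S.distOrth z := by
  obtain ⟨_ | n, rfl⟩ := h
  · exact absurd rfl hne
  · exact T.distOrth_iterate_par_lt n ht

theorem distOrth_le_of_inSub {t z : V} (ht : t ≠ S.f) (h : T.inSub t z) :
    S.distOrth t ≤ S.distOrth z := by
  rcases eq_or_ne z t with rfl | hne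
  · exact le_rfl
  · exact (T.distOrth_lt_of_inSub ht h hne).le

theorem eq_f_of_inSub_f {t : V} (h : T.inSub t S.f) : t = S.f := by
  obtain ⟨n, rfl⟩ := h
  exact Function.iterate_fixed T.par_f n

theorem odd_length_iff_op_of_getLast?_eq {u : V} (hu : u ≠ S.f) {p : S.G.Walk S.f u}
    (hp : S.IsAltPath p) (hlast : p.edges.getLast? = some s(T.par u, u)) :
    Odd p.length ↔ S.op u = true := by
  obtain ⟨p', hp', hlen', hlast'⟩ := T.exists_isAltPath_getLast?_eq_par hu
  obtain ⟨q, hq⟩ := S.exists_isShortestAltPath (θ := S.op u) (v := u) (T.distOrth_ne_top hu)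
  have hq' : p'.length = q.length := by exact_mod_cast hlen'.trans hq.length_eq.symm
  have h := (hp.mem_M_iff_of_getLast?_eq hlast).symm.trans (hp'.mem_M_iff_of_getLast?_eq hlast')
  rw [← hq.odd_length_iff, ← Nat.not_even_iff_odd, ← Nat.not_even_iff_odd, h, hq']

theorem incoming_of_crossing {t y z : V} {p : S.G.Walk S.f t} {p₁ : S.G.Walk S.f y}
    {hyz : S.G.Adj y z} {p₂ : S.G.Walk z t} (hp : S.IsAltPath p)
    (hpar : Odd p.length ↔ (!S.op t) = true) (hsplit : p = p₁.append (Walk.cons hyz p₂))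
    (hy : ¬ T.inSub t y) (hz : T.inSub t z) : T.Incoming t s(y, z) := by
  refine ⟨hyz, ?_, y, z, rfl, hz, hy⟩
  rintro ⟨u, hu, he⟩
  rcases Sym2.eq_iff.mp he with ⟨hyu, hzu⟩ | ⟨hyu, hzu⟩ <;> subst hyu hzu
  · obtain ⟨n, hn⟩ := hz
    exact hy ⟨n + 1, by rwa [Function.iterate_succ_apply]⟩
  · obtain ⟨_ | n, hn⟩ := hz
    · have hzt : z = t := hn
      subst hzt
      have hp₂ : p₂ = Walk.nil := Walk.eq_nil_iff_nil.mpr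
        (Walk.isPath_iff_nil.mp (hsplit ▸ hp.1).of_append_right.of_cons)
      subst hp₂
      have h := T.odd_length_iff_op_of_getLast?_eq hu hp (by simp [hsplit, Walk.edges_append])
      have := h.symm.trans hpar
      cases S.op z <;> simp at this
    · exact hy ⟨n, by rwa [Function.iterate_succ_apply] at hn⟩

theorem length_le_of_crossing {t y z : V} (ht : t ≠ S.f) {p q : S.G.Walk S.f t}
    {p₁ : S.G.Walk S.f y} {hyz : S.G.Adj y z} {p₂ : S.G.Walk z t}
    (hp : S.IsShortestAltPath (!S.op t) p) (hq : S.IsShortestAltPath (S.op t) q)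
    (hsplit : p = p₁.append (Walk.cons hyz p₂)) (hz : T.inSub t z) : q.length ≤ p₁.length := by
  by_contra! hlt
  have hp' : S.IsAltPath ((p₁.concat hyz).append p₂) := by
    rw [Walk.concat_append, ← hsplit]
    exact hp.isAltPath
  obtain rfl : z = t := by
    by_contra hne
    have hzq : S.distOrth z ≤ q.length := by
      refine (S.distOrth_le_length hp'.of_append_left).trans ?_
      rw [Walk.length_concat]
      exact_mod_cast hlt
    exact (T.distOrth_lt_of_inSub ht hz hne).not_ge (hzq.trans_eq hq.length_eq)
  have hp₂ : p₂ = Walk.nil :=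
    Walk.eq_nil_iff_nil.mpr (Walk.isPath_iff_nil.mp hp'.1.of_append_right)
  have := hq.length_lt hp
  rw [hsplit, hp₂, Walk.length_append, Walk.length_cons, Walk.length_nil] at this
  omega

theorem hlevel_add_distOrth_le_vlevel {t : V} (ht : t ≠ S.f) {e : Sym2 V}
    (he : T.Incoming t e) : S.hlevel e + S.distOrth t ≤ S.vlevel e := by
  obtain ⟨hG, -, y, z, rfl, hz, -⟩ := he
  have hdz := T.distOrth_le_of_inSub ht hz
  have hb : S.distOrth t ≤ S.adist (S.rho s(y, z)) z := hdz.trans (S.distOrth_le_adist _ z)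
  have ha : S.distOrth t ≤ S.adist (S.rho s(y, z)) y + 1 :=
    hdz.trans (S.distOrth_le_adist_add_one hG (S.rho_eq_true_iff _).symm)
  simp only [Sys.hlevel, Sys.vlevel, Sym2.lift_mk]
  rcases le_total (S.adist (S.rho s(y, z)) y) (S.adist (S.rho s(y, z)) z) with h | h
  · rw [max_eq_right h]
    calc _ ≤ S.adist (S.rho s(y, z)) z + (S.adist (S.rho s(y, z)) y + 1) := by gcongr
      _ = _ := by ring
  · rw [max_eq_left h]
    calc _ ≤ S.adist (S.rho s(y, z)) y + S.adist (S.rho s(y, z)) z := by gcongr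
      _ ≤ _ := le_self_add

theorem exists_incoming_vlevel_le_hlevel_lt {t : V} (ht : S.distUnorth t ≠ ⊤) :
    ∃ e, T.Incoming t e ∧ S.vlevel e ≤ S.distUnorth t + S.distOrth t ∧
      S.hlevel e < S.distUnorth t := by
  have htf : t ≠ S.f := by
    rintro rfl
    exact ht S.distUnorth_f
  obtain ⟨p, hp⟩ := S.exists_isShortestAltPath ht
  obtain ⟨q, hq⟩ := S.exists_isShortestAltPath (θ := S.op t) (v := t) (T.distOrth_ne_top htf)
  obtain ⟨y, z, p₁, hyz, p₂, hsplit, hy, hz⟩ :=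
    p.exists_eq_append_cons_of_start_not_mem_of_end_mem (s := {v | T.inSub t v})
      (fun h => htf (T.eq_f_of_inSub_f h)) ⟨0, rfl⟩
  have hqk := T.length_le_of_crossing htf hp hq hsplit hz
  obtain ⟨r, hr, hrlen, hrpar⟩ := S.exists_isAltPath_reroute hp hsplit hq.isAltPath hqk
  have hp' : S.IsAltPath ((p₁.concat hyz).append p₂) := by
    rw [Walk.concat_append, ← hsplit]
    exact hp.isAltPath
  have hρ : Odd p₁.length ↔ S.rho s(y, z) = true := by
    rw [S.rho_eq_true_iff, hp'.of_append_left.mem_M_iff_of_getLast?_eq (by simp),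
      Walk.length_concat, Nat.even_add_one, Nat.not_even_iff_odd]
  have hay := S.adist_le_length hp'.of_append_left.of_append_left hρ
  have haz := S.adist_le_length hr (by rw [← Nat.not_even_iff_odd, hrpar, Nat.not_even_iff_odd, hρ])
  have hL : p.length = p₁.length + 1 + p₂.length := by
    rw [hsplit, Walk.length_append, Walk.length_cons]
    ring
  have hβ : S.distUnorth t = p.length := hp.length_eq.symm
  have hα : S.distOrth t = q.length := hq.length_eq.symm
  rw [hβ, hα]
  refine ⟨s(y, z), T.incoming_of_crossing hp.isAltPath hp.odd_length_iff hsplit hy hz, ?_, ?_⟩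
  · simp only [Sys.vlevel, Sym2.lift_mk]
    calc _ ≤ (p₁.length : ℕ∞) + ((q.length + p₂.length : ℕ) : ℕ∞) + 1 := by
          gcongr
          exact haz.trans (by exact_mod_cast hrlen)
      _ = ((p.length + q.length : ℕ) : ℕ∞) := by rw [hL]; push_cast; ring
  · simp only [Sys.hlevel, Sym2.lift_mk]
    refine max_lt (hay.trans_lt ?_) (haz.trans_lt ?_) <;> norm_cast <;> omega

end ABT

/-- For any vertex `t` of an alternating base tree with `dist^β(t) < ∞`, the
unorthodox distance exceeds the height of a minimum-level incoming edge of `T(t)`: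
`dist^β(t) > hlevel(e*(t))`. -/
theorem stmt9 (S : Sys V) (T : ABT S) (t : V) (ht : S.distUnorth t < ⊤)
    (estar : Sym2 V) (hestar : T.IsMIE t estar) :
    S.hlevel estar < S.distUnorth t := by
  have htf : t ≠ S.f := by
    rintro rfl
    exact ht.ne S.distUnorth_f
  obtain ⟨e, he, hv, hh⟩ := T.exists_incoming_vlevel_le_hlevel_lt ht.ne
  by_contra! hge
  have hvle : S.vlevel e ≤ S.vlevel estar := calc
    S.vlevel e ≤ S.distUnorth t + S.distOrth t := hv
    _ ≤ S.hlevel estar + S.distOrth t := by gcongr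
    _ ≤ S.vlevel estar := T.hlevel_add_distOrth_le_vlevel htf hestar.1
  have hvfin : S.vlevel e ≠ ⊤ :=
    ne_top_of_le_ne_top (WithTop.add_ne_top.mpr ⟨ht.ne, T.distOrth_ne_top htf⟩) hv
  exact (hh.trans_le hge).not_ge (S.hlevel_le_of_level_le (hestar.2 e he) hvle hvfin)
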